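/- arXiv:2509.24084 — 4 statements merged into one kernel-verified Lean document; each statement's English description precedes it below -/
import Mathlib

section
/- Let V be a 2π-periodic C^∞ vector field on ℝ^d with flow φ_V, and let Min_V be the closure of the set of its minimal points. For every ε > 0 there exist δ > 0 and T > 0 such that every δ-solution x : [0,T] → ℝ^d of ẋ = V(x) comes ε-close to Min_V in the torus distance, i.e. there exists t ∈ [0,T] with dist_T(x(t), Min_V) < ε (that is, dist_T(x(t), y) < ε for some y ∈ Min_V). -/
open Real Set Filter Topology
open scoped NNReal

noncomputable section

/-- Euclidean space `ℝ^d`. -/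
abbrev Ed (d : ℕ) : Type := EuclideanSpace ℝ (Fin d)

/-- The vector `2πk ∈ 2πℤ^d`. -/
def twoPiVec (d : ℕ) (k : Fin d → ℤ) : Ed d := WithLp.toLp 2 (fun i => 2 * π * (k i))

/-- A map `ℝ^d → ℝ^d` is `2π`-periodic if it is invariant under translations by `2πℤ^d`. -/
def IsPeriodicVF {d : ℕ} (V : Ed d → Ed d) : Prop :=
  ∀ (x : Ed d) (k : Fin d → ℤ), V (x + twoPiVec d k) = V x

/-- The torus distance `dist_T(p,q) = inf { ‖p - q - 2πk‖ : k ∈ ℤ^d }`. -/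
def distT {d : ℕ} (p q : Ed d) : ℝ := ⨅ k : Fin d → ℤ, ‖p - q - twoPiVec d k‖

/-- `φ` is the (complete) flow of the vector field `V`. -/
def IsFlowOf {d : ℕ} (V : Ed d → Ed d) (φ : ℝ → Ed d → Ed d) : Prop :=
  (∀ x, φ 0 x = x) ∧ ∀ (t : ℝ) (x : Ed d), HasDerivAt (fun s => φ s x) (V (φ t x)) t

/-- A `δ`-solution of `ẋ = V(x)` on `[a,b]`: a continuous, piecewise `C¹` curve
(differentiable off a finite set) with `‖ẋ(t) - V(x(t))‖ ≤ δ` wherever differentiable. -/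
def IsDeltaSol {d : ℕ} (V : Ed d → Ed d) (δ a b : ℝ) (x : ℝ → Ed d) : Prop :=
  ContinuousOn x (Icc a b) ∧
  ∃ F : Finset ℝ, ∀ t ∈ Icc a b, t ∉ F →
    ∃ v : Ed d, HasDerivAt x v t ∧ ‖v - V (x t)‖ ≤ δ

/-- `p` is nonwandering for the flow `φ` on the torus. -/
def NonwanderingPt {d : ℕ} (φ : ℝ → Ed d → Ed d) (p : Ed d) : Prop :=
  ∀ ε > 0, ∃ T, 1 ≤ T ∧ ∃ p' : Ed d, distT p' p < ε ∧ distT (φ T p') p < ε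

/-- `p` is chain recurrent for `ẋ = V(x)` on the torus. -/
def ChainRecurrentPt {d : ℕ} (V : Ed d → Ed d) (p : Ed d) : Prop :=
  ∀ δ > 0, ∃ T, 1 ≤ T ∧ ∃ x : ℝ → Ed d,
    IsDeltaSol V δ 0 T x ∧ x 0 = p ∧ ∃ k, x T - p = twoPiVec d k

/-- A set is invariant if it is invariant under the flow and under translations by `2πℤ^d`. -/
def TorusInvariant {d : ℕ} (φ : ℝ → Ed d → Ed d) (S : Set (Ed d)) : Prop :=
  (∀ x ∈ S, ∀ t, φ t x ∈ S) ∧ ∀ x ∈ S, ∀ k, x + twoPiVec d k ∈ S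

/-- The orbit of `p` together with all its `2πℤ^d`-translates. -/
def torusOrbit {d : ℕ} (φ : ℝ → Ed d → Ed d) (p : Ed d) : Set (Ed d) :=
  {y | ∃ t k, y = φ t p + twoPiVec d k}

/-- `p` is minimal: the closure of its (torus) orbit contains no nonempty proper closed
invariant subset. -/
def IsMinimalPt {d : ℕ} (φ : ℝ → Ed d → Ed d) (p : Ed d) : Prop :=
  ∀ S ⊆ closure (torusOrbit φ p), IsClosed S → TorusInvariant φ S →
    S.Nonempty → S = closure (torusOrbit φ p)

/-- `Min_V`: the closure of the set of all minimal points. -/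
def MinV {d : ℕ} (φ : ℝ → Ed d → Ed d) : Set (Ed d) := closure {p | IsMinimalPt φ p}

/-- The Lie bracket `[X,Y](p) = DY(p) X(p) - DX(p) Y(p)` of vector fields on `ℝ^d`. -/
def vfBracket {d : ℕ} (X Y : Ed d → Ed d) : Ed d → Ed d :=
  fun p => fderiv ℝ Y p (X p) - fderiv ℝ X p (Y p)

/-- `ℬ(𝒜)`: the smallest family of vector fields containing `𝒜` and closed under brackets. -/
inductive LieGen {d : ℕ} (A : Set (Ed d → Ed d)) : (Ed d → Ed d) → Prop
  | base : ∀ X ∈ A, LieGen A X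
  | bracket : ∀ X Y, LieGen A X → LieGen A Y → LieGen A (vfBracket X Y)

/-- The family `A` satisfies the Hörmander condition at `p`. -/
def Hormander {d : ℕ} (A : Set (Ed d → Ed d)) (p : Ed d) : Prop :=
  Submodule.span ℝ {v : Ed d | ∃ W, LieGen A W ∧ W p = v} = ⊤

/-- A controlled trajectory of `ẋ = V(x) + Σⱼ uⱼ(t) Xⱼ(x)` on `[0,T]` with piecewise
continuous controls `u`. -/
def IsCtrlTraj {d m : ℕ} (V : Ed d → Ed d) (X : Fin m → Ed d → Ed d) (T : ℝ)
    (u : Fin m → ℝ → ℝ) (x : ℝ → Ed d) : Prop :=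
  ContinuousOn x (Icc 0 T) ∧
  ∃ F : Finset ℝ,
    (∀ j, ContinuousOn (u j) (Icc 0 T \ F)) ∧
    ∀ t ∈ Icc 0 T, t ∉ F →
      HasDerivAt x (V (x t) + ∑ j, u j t • X j (x t)) t

/-- The attainable set `A_{ε,p}` on the torus. -/
def Attainable {d m : ℕ} (V : Ed d → Ed d) (X : Fin m → Ed d → Ed d) (ε : ℝ) (p : Ed d) :
    Set (Ed d) :=
  {q | ∃ θ > 0, ∃ u x, IsCtrlTraj V X θ u x ∧ (∀ j t, |u j t| ≤ ε) ∧
    x 0 = p ∧ ∃ k, x θ - q = twoPiVec d k}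

namespace Aux

lemma twoPiVec_add {d : ℕ} (k k' : Fin d → ℤ) :
    twoPiVec d (k + k') = twoPiVec d k + twoPiVec d k' := by
  ext i
  simp only [twoPiVec, PiLp.add_apply, Pi.add_apply, WithLp.ofLp_toLp]
  push_cast; ring

lemma twoPiVec_zero {d : ℕ} : twoPiVec d 0 = 0 := by
  ext i; simp [twoPiVec]

lemma twoPiVec_neg {d : ℕ} (k : Fin d → ℤ) : twoPiVec d (-k) = -twoPiVec d k := by
  ext i
  simp only [twoPiVec, PiLp.neg_apply, Pi.neg_apply, WithLp.ofLp_toLp]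
  push_cast; ring

lemma distT_bdd {d : ℕ} (p q : Ed d) :
    BddBelow (Set.range fun k : Fin d → ℤ => ‖p - q - twoPiVec d k‖) :=
  ⟨0, by rintro r ⟨k, rfl⟩; exact norm_nonneg _⟩

lemma distT_le {d : ℕ} (p q : Ed d) (k : Fin d → ℤ) :
    distT p q ≤ ‖p - q - twoPiVec d k‖ :=
  ciInf_le (distT_bdd p q) k

lemma distT_le_norm {d : ℕ} (p q : Ed d) : distT p q ≤ ‖p - q‖ := by
  simpa [twoPiVec_zero] using distT_le p q 0

lemma distT_le_norm_add {d : ℕ} (p p' q : Ed d) :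
    distT p q ≤ ‖p - p'‖ + distT p' q := by
  have h : ∀ k : Fin d → ℤ, distT p q - ‖p - p'‖ ≤ ‖p' - q - twoPiVec d k‖ := by
    intro k
    have h1 : distT p q ≤ ‖p - q - twoPiVec d k‖ := distT_le p q k
    have h2 : ‖p - q - twoPiVec d k‖ ≤ ‖p - p'‖ + ‖p' - q - twoPiVec d k‖ := by
      calc ‖p - q - twoPiVec d k‖ = ‖(p - p') + (p' - q - twoPiVec d k)‖ := by abel_nf
        _ ≤ _ := norm_add_le _ _
    linarith
  have := le_ciInf h
  have hd : distT p q - ‖p - p'‖ ≤ distT p' q := this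
  linarith

lemma distT_translate {d : ℕ} (p q : Ed d) (k0 : Fin d → ℤ) :
    distT (p + twoPiVec d k0) q = distT p q := by
  have key : ∀ (p : Ed d) (k0 : Fin d → ℤ), distT (p + twoPiVec d k0) q ≤ distT p q := by
    intro p k0
    refine le_ciInf fun k => ?_
    have := distT_le (p + twoPiVec d k0) q (k + k0)
    calc distT (p + twoPiVec d k0) q ≤ ‖p + twoPiVec d k0 - q - twoPiVec d (k + k0)‖ := this
      _ = ‖p - q - twoPiVec d k‖ := by rw [twoPiVec_add]; abel_nf
  refine le_antisymm (key p k0) ?_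
  have := key (p + twoPiVec d k0) (-k0)
  rw [twoPiVec_neg] at this
  simpa using this

lemma exists_rep {d : ℕ} (x : Ed d) :
    ∃ k : Fin d → ℤ, ‖x + twoPiVec d k‖ ≤ 7 * d := by
  refine ⟨fun i => -⌊x i / (2 * π)⌋, ?_⟩
  have hcoord : ∀ i, ‖(x + twoPiVec d (fun i => -⌊x i / (2 * π)⌋)) i‖ ≤ 7 := by
    intro i
    have h2π : (0:ℝ) < 2 * π := by positivity
    have hfr : (x + twoPiVec d (fun i => -⌊x i / (2 * π)⌋)) i
        = 2 * π * Int.fract (x i / (2 * π)) := by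
      have : (x + twoPiVec d (fun i => -⌊x i / (2 * π)⌋)) i
          = x i + 2 * π * (-⌊x i / (2 * π)⌋ : ℤ) := by simp [twoPiVec]
      rw [this, Int.fract]
      push_cast
      field_simp
      ring
    rw [hfr]
    have h0 : 0 ≤ Int.fract (x i / (2 * π)) := Int.fract_nonneg _
    have h1 : Int.fract (x i / (2 * π)) < 1 := Int.fract_lt_one _
    have : |2 * π * Int.fract (x i / (2 * π))| ≤ 2 * π := by
      rw [abs_of_nonneg (by positivity)]
      nlinarith
    calc ‖2 * π * Int.fract (x i / (2 * π))‖ ≤ 2 * π := by rwa [Real.norm_eq_abs]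
      _ ≤ 7 := by nlinarith [Real.pi_lt_d2]
  rcases Nat.eq_zero_or_pos d with hd | hd
  · subst hd
    simp [EuclideanSpace.norm_eq]
  · rw [EuclideanSpace.norm_eq]
    have hsum : (∑ i, ‖(x + twoPiVec d (fun i => -⌊x i / (2 * π)⌋)) i‖ ^ 2) ≤ d * 49 := by
      calc (∑ i, ‖(x + twoPiVec d (fun i => -⌊x i / (2 * π)⌋)) i‖ ^ 2)
          ≤ ∑ _i : Fin d, (49:ℝ) := by
            refine Finset.sum_le_sum fun i _ => ?_
            have := hcoord i
            nlinarith [norm_nonneg ((x + twoPiVec d (fun i => -⌊x i / (2 * π)⌋)) i)]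
        _ = d * 49 := by simp [mul_comm]
    have h7d : (0:ℝ) ≤ 7 * d := by positivity
    have : Real.sqrt (∑ i, ‖(x + twoPiVec d (fun i => -⌊x i / (2 * π)⌋)) i‖ ^ 2)
        ≤ Real.sqrt ((7 * d)^2) := by
      apply Real.sqrt_le_sqrt
      have hd1 : (1:ℝ) ≤ d := by exact_mod_cast hd
      nlinarith
    rwa [Real.sqrt_sq h7d] at this

/-- Global Lipschitz constant for a smooth periodic vector field. -/
lemma exists_lipschitz {d : ℕ} (V : Ed d → Ed d) (hV : ContDiff ℝ (⊤ : ℕ∞) V)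
    (hVper : IsPeriodicVF V) : ∃ K : ℝ≥0, 1 ≤ (K:ℝ) ∧ LipschitzWith K V := by
  have hdiff : Differentiable ℝ V := hV.differentiable (by simp)
  have hcont : Continuous fun x => fderiv ℝ V x := hV.continuous_fderiv (by simp)
  -- fderiv is periodic
  have hper : ∀ (x : Ed d) (k : Fin d → ℤ), fderiv ℝ V (x + twoPiVec d k) = fderiv ℝ V x := by
    intro x k
    have h1 : HasFDerivAt (fun y => y + twoPiVec d k)
        (ContinuousLinearMap.id ℝ (Ed d)) x := (hasFDerivAt_id x).add_const _
    have h2 : HasFDerivAt (fun y => V (y + twoPiVec d k))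
        ((fderiv ℝ V (x + twoPiVec d k)).comp (ContinuousLinearMap.id ℝ (Ed d))) x :=
      (hdiff (x + twoPiVec d k)).hasFDerivAt.comp x h1
    have h3 : (fun y => V (y + twoPiVec d k)) = V := funext fun y => hVper y k
    rw [h3, ContinuousLinearMap.comp_id] at h2
    exact h2.fderiv.symm
  -- bounded on the ball
  obtain ⟨C, hC⟩ := (isCompact_closedBall (0 : Ed d) (7 * d)).exists_bound_of_continuousOn
    hcont.norm.continuousOn
  have hbound : ∀ x : Ed d, ‖fderiv ℝ V x‖ ≤ max C 1 := by
    intro x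
    obtain ⟨k, hk⟩ := exists_rep x
    have hx : x + twoPiVec d k ∈ Metric.closedBall (0 : Ed d) (7 * d) := by
      simpa [Metric.mem_closedBall, dist_eq_norm] using hk
    have hCx : ‖fderiv ℝ V (x + twoPiVec d k)‖ ≤ C := by
      have := hC _ hx; rwa [Real.norm_eq_abs, abs_of_nonneg (norm_nonneg _)] at this
    have heq := hper x k
    calc ‖fderiv ℝ V x‖ = ‖fderiv ℝ V (x + twoPiVec d k)‖ := by rw [heq]
      _ ≤ C := hCx
      _ ≤ max C 1 := le_max_left _ _
  refine ⟨⟨max C 1, le_trans zero_le_one (le_max_right _ _)⟩, le_max_right _ _, ?_⟩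
  apply lipschitzWith_of_nnnorm_fderiv_le hdiff
  intro x
  have := hbound x
  exact NNReal.coe_le_coe.1 this


variable {d : ℕ} {V : Ed d → Ed d} {φ : ℝ → Ed d → Ed d} {K : ℝ≥0}

lemma flow_unique (hK : LipschitzWith K V) (hφ : IsFlowOf V φ)
    (f : ℝ → Ed d) (hf : ∀ t, HasDerivAt f (V (f t)) t) (t : ℝ) : f t = φ t (f 0) := by
  have hmem : t ∈ Icc (-(|t|+1)) (|t|+1) := by
    constructor <;> [linarith [neg_abs_le t]; linarith [le_abs_self t]]
  have h0 : (0:ℝ) ∈ Ioo (-(|t|+1)) (|t|+1) := by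
    constructor <;> [nlinarith [abs_nonneg t]; nlinarith [abs_nonneg t]]
  have := ODE_solution_unique_of_mem_Icc (v := fun _ y => V y) (s := fun _ => univ)
    (fun _ _ => hK.lipschitzOnWith) h0
    (continuousOn_of_forall_continuousAt fun s _ => (hf s).continuousAt)
    (fun s _ => hf s) (fun _ _ => trivial)
    (continuousOn_of_forall_continuousAt fun s _ => (hφ.2 s (f 0)).continuousAt)
    (fun s _ => hφ.2 s (f 0)) (fun _ _ => trivial)
    (by rw [hφ.1])
  exact this hmem

lemma flow_cont_t (hφ : IsFlowOf V φ) (x : Ed d) : Continuous fun t => φ t x :=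
  continuous_iff_continuousAt.2 fun t => (hφ.2 t x).continuousAt

lemma flow_group (hK : LipschitzWith K V) (hφ : IsFlowOf V φ) (s t : ℝ) (x : Ed d) :
    φ (s + t) x = φ s (φ t x) := by
  have hf : ∀ r : ℝ, HasDerivAt (fun r => φ (r + t) x) (V (φ (r + t) x)) r := by
    intro r
    have := (hφ.2 (r + t) x).scomp (x := r) (h := fun r : ℝ => r + t)
      ((hasDerivAt_id r).add_const t)
    simpa [Function.comp_def] using this
  have := flow_unique hK hφ (fun r => φ (r + t) x) hf s
  simpa [hφ.1] using this

lemma flow_equivar (hK : LipschitzWith K V) (hφ : IsFlowOf V φ) (hVper : IsPeriodicVF V)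
    (t : ℝ) (x : Ed d) (k : Fin d → ℤ) :
    φ t (x + twoPiVec d k) = φ t x + twoPiVec d k := by
  have hf : ∀ s : ℝ, HasDerivAt (fun s => φ s x + twoPiVec d k)
      (V (φ s x + twoPiVec d k)) s := by
    intro s
    rw [hVper (φ s x) k]
    exact (hφ.2 s x).add_const _
  have := flow_unique hK hφ (fun s => φ s x + twoPiVec d k) hf t
  rw [hφ.1] at this
  exact this.symm

lemma flow_lip (hK : LipschitzWith K V) (hφ : IsFlowOf V φ) (t : ℝ) (p q : Ed d) :
    dist (φ t p) (φ t q) ≤ dist p q * exp (K * |t|) := by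
  rcases le_or_gt 0 t with ht | ht
  · have := dist_le_of_trajectories_ODE (v := fun _ y => V y) (a := 0) (b := t)
      (δ := dist p q) (fun _ => hK)
      (continuousOn_of_forall_continuousAt fun s _ => (hφ.2 s p).continuousAt)
      (fun s _ => (hφ.2 s p).hasDerivWithinAt)
      (continuousOn_of_forall_continuousAt fun s _ => (hφ.2 s q).continuousAt)
      (fun s _ => (hφ.2 s q).hasDerivWithinAt)
      (by rw [hφ.1, hφ.1]) t ⟨ht, le_rfl⟩
    rw [abs_of_nonneg ht]
    simpa using this
  · have hK' : LipschitzWith K (fun y : Ed d => -V y) :=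
      LipschitzWith.of_dist_le_mul fun y z => by
        rw [dist_neg_neg]; exact hK.dist_le_mul y z
    have hder : ∀ (z : Ed d) (s : ℝ), HasDerivAt (fun s => φ (-s) z) (-V (φ (-s) z)) s := by
      intro z s
      have := (hφ.2 (-s) z).scomp (x := s) (h := fun s : ℝ => -s) (hasDerivAt_neg s)
      simpa [Function.comp_def] using this
    have := dist_le_of_trajectories_ODE (v := fun _ y => -V y) (a := 0) (b := -t)
      (δ := dist p q) (fun _ => hK')
      (continuousOn_of_forall_continuousAt fun s _ => (hder p s).continuousAt)
      (fun s _ => (hder p s).hasDerivWithinAt)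
      (continuousOn_of_forall_continuousAt fun s _ => (hder q s).continuousAt)
      (fun s _ => (hder q s).hasDerivWithinAt)
      (by simp [hφ.1]) (-t) ⟨by linarith, le_rfl⟩
    simp only [neg_neg, sub_zero] at this
    rwa [abs_of_neg ht]


variable {d : ℕ} {V : Ed d → Ed d} {φ : ℝ → Ed d → Ed d} {K : ℝ≥0}

lemma flow_shift_deriv (hφ : IsFlowOf V φ) (u : ℝ) (z : Ed d) (t : ℝ) :
    HasDerivAt (fun t => φ (t - u) z) (V (φ (t - u) z)) t := by
  have := (hφ.2 (t - u) z).scomp (x := t) (h := fun t : ℝ => t - u)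
    ((hasDerivAt_id t).sub_const u)
  simpa [Function.comp_def] using this

lemma approx_core (hK : LipschitzWith K V) (hφ : IsFlowOf V φ) {δ : ℝ} (hδ : 0 ≤ δ)
    (hK0 : (0:ℝ) < K) (x : ℝ → Ed d) (a b : ℝ) (hab : a ≤ b)
    (hx : ContinuousOn x (Icc a b))
    (hd : ∀ t ∈ Ioo a b, ∃ v, HasDerivAt x v t ∧ ‖v - V (x t)‖ ≤ δ) :
    dist (x b) (φ (b - a) (x a)) ≤ δ / K * (exp (K * (b - a)) - 1) := by
  rcases eq_or_lt_of_le hab with heq | hlt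
  · subst heq
    simp [hφ.1]
  · classical
    choose! v hv1 hv2 using hd
    have key : ∀ u ∈ Ioc a b, dist (x b) (φ (b - u) (x u)) ≤ δ / K * (exp (K * (b - a)) - 1) := by
      intro u hu
      have hres := dist_le_of_approx_trajectories_ODE (v := fun _ y => V y)
        (a := u) (b := b) (εf := δ) (εg := 0) (δ := 0) (f' := v)
        (g := fun t => φ (t - u) (x u)) (g' := fun t => V (φ (t - u) (x u)))
        (fun _ => hK)
        (hx.mono (Icc_subset_Icc hu.1.le le_rfl))
        (fun t ht => (hv1 t ⟨lt_of_lt_of_le hu.1 ht.1, ht.2⟩).hasDerivWithinAt)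
        (fun t ht => by
          rw [dist_eq_norm]; exact hv2 t ⟨lt_of_lt_of_le hu.1 ht.1, ht.2⟩)
        (((flow_cont_t hφ (x u)).comp (continuous_id.sub continuous_const)).continuousOn)
        (fun t _ => (flow_shift_deriv hφ u (x u) t).hasDerivWithinAt)
        (fun t _ => by simp)
        (by simp [hφ.1])
      have hb := hres b ⟨hu.2, le_rfl⟩
      have heq2 : gronwallBound 0 (↑K) (δ + 0) (b - u) = δ / K * (exp (K * (b - u)) - 1) := by
        rw [gronwallBound_of_K_ne_0 (ne_of_gt hK0)]
        simp
      rw [heq2] at hb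
      have hmono : exp ((K:ℝ) * (b - u)) ≤ exp ((K:ℝ) * (b - a)) := by
        apply exp_le_exp.2
        have : b - u ≤ b - a := by linarith [hu.1]
        nlinarith
      have hdk : 0 ≤ δ / (K:ℝ) := div_nonneg hδ hK0.le
      nlinarith
    refine le_of_forall_pos_le_add fun ε0 hε0 => ?_
    set E' := exp ((K:ℝ) * (b - a)) with hE'def
    have hE' : 0 < E' := exp_pos _
    have hr : 0 < ε0 / (4 * E') := by positivity
    haveI : (𝓝[Ioc a b] a).NeBot := by
      refine mem_closure_iff_nhdsWithin_neBot.mp ?_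
      rw [closure_Ioc hlt.ne]
      exact left_mem_Icc.2 hab
    have h1 : Tendsto x (𝓝[Ioc a b] a) (𝓝 (x a)) :=
      (hx a (left_mem_Icc.2 hab)).mono_left (nhdsWithin_mono a Ioc_subset_Icc_self)
    have h2 : Tendsto (fun u => φ (u - a) (x a)) (𝓝[Ioc a b] a) (𝓝 (x a)) := by
      have hc : Continuous fun u : ℝ => φ (u - a) (x a) :=
        (flow_cont_t hφ (x a)).comp (continuous_id.sub continuous_const)
      have := hc.tendsto a
      rw [sub_self, hφ.1] at this
      exact this.mono_left nhdsWithin_le_nhds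
    have h3 : ∀ᶠ u in 𝓝[Ioc a b] a, u ∈ Ioc a b := eventually_mem_nhdsWithin
    obtain ⟨u, hu1, hu2, hu3⟩ :=
      ((Metric.tendsto_nhds.mp h1 _ hr).and ((Metric.tendsto_nhds.mp h2 _ hr).and h3)).exists
    have hgrp : φ (b - a) (x a) = φ (b - u) (φ (u - a) (x a)) := by
      rw [← flow_group hK hφ]; congr 1; ring
    have hlip := flow_lip hK hφ (b - u) (x u) (φ (u - a) (x a))
    rw [abs_of_nonneg (by linarith [hu3.2] : (0:ℝ) ≤ b - u)] at hlip
    have hexp : exp ((K:ℝ) * (b - u)) ≤ E' := by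
      rw [hE'def]
      apply exp_le_exp.2
      have h4 : a < u := hu3.1
      nlinarith
    have hd1 : dist (x u) (φ (u - a) (x a)) < 2 * (ε0 / (4 * E')) := by
      have := dist_triangle (x u) (x a) (φ (u - a) (x a))
      rw [dist_comm (x a)] at this
      linarith
    have hstep : dist (φ (b - u) (x u)) (φ (b - a) (x a)) ≤ ε0 / 2 := by
      rw [hgrp]
      have hdn : (0:ℝ) ≤ dist (x u) (φ (u - a) (x a)) := dist_nonneg
      calc dist (φ (b - u) (x u)) (φ (b - u) (φ (u - a) (x a)))
          ≤ dist (x u) (φ (u - a) (x a)) * exp ((K:ℝ) * (b - u)) := hlip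
        _ ≤ 2 * (ε0 / (4 * E')) * E' := by nlinarith [exp_pos ((K:ℝ) * (b - u))]
        _ = ε0 / 2 := by field_simp; ring
    calc dist (x b) (φ (b - a) (x a))
        ≤ dist (x b) (φ (b - u) (x u)) + dist (φ (b - u) (x u)) (φ (b - a) (x a)) :=
          dist_triangle _ _ _
      _ ≤ δ / K * (exp (K * (b - a)) - 1) + ε0 / 2 := by
          have := key u hu3
          linarith
      _ ≤ δ / K * (exp (K * (b - a)) - 1) + ε0 := by linarith

lemma approx_glue (hK : LipschitzWith K V) (hφ : IsFlowOf V φ) {δ : ℝ} (hδ : 0 ≤ δ)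
    (hK0 : (0:ℝ) < K) (F : Finset ℝ) :
    ∀ (x : ℝ → Ed d) (a b : ℝ), a ≤ b → ContinuousOn x (Icc a b) →
      (∀ t ∈ Ioo a b, t ∉ F → ∃ v, HasDerivAt x v t ∧ ‖v - V (x t)‖ ≤ δ) →
      dist (x b) (φ (b - a) (x a)) ≤ δ / K * (exp (K * (b - a)) - 1) := by
  classical
  induction F using Finset.strongInduction with
  | _ F ih =>
    intro x a b hab hx hd
    by_cases hF : ∃ c ∈ F, c ∈ Ioo a b
    · obtain ⟨c, hcF, hc⟩ := hF
      have h1 := ih (F.erase c) (Finset.erase_ssubset hcF) x a c hc.1.le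
        (hx.mono (Icc_subset_Icc le_rfl hc.2.le))
        (fun t ht htF => hd t ⟨ht.1, ht.2.trans hc.2⟩
          (fun hmem => htF (Finset.mem_erase.2 ⟨ne_of_lt ht.2, hmem⟩)))
      have h2 := ih (F.erase c) (Finset.erase_ssubset hcF) x c b hc.2.le
        (hx.mono (Icc_subset_Icc hc.1.le le_rfl))
        (fun t ht htF => hd t ⟨hc.1.trans ht.1, ht.2⟩
          (fun hmem => htF (Finset.mem_erase.2 ⟨ne_of_gt ht.1, hmem⟩)))
      have hgrp : φ (b - a) (x a) = φ (b - c) (φ (c - a) (x a)) := by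
        rw [← flow_group hK hφ]; congr 1; ring
      have hlip := flow_lip hK hφ (b - c) (x c) (φ (c - a) (x a))
      rw [abs_of_nonneg (by linarith [hc.2] : (0:ℝ) ≤ b - c)] at hlip
      set A := exp ((K:ℝ) * (c - a)) with hA
      set B := exp ((K:ℝ) * (b - c)) with hB
      have hAB : A * B = exp ((K:ℝ) * (b - a)) := by
        rw [hA, hB, ← exp_add]; congr 1; ring
      have hBpos : 0 < B := exp_pos _
      have hdn : (0:ℝ) ≤ dist (x c) (φ (c - a) (x a)) := dist_nonneg
      calc dist (x b) (φ (b - a) (x a))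
          ≤ dist (x b) (φ (b - c) (x c)) + dist (φ (b - c) (x c)) (φ (b - a) (x a)) :=
            dist_triangle _ _ _
        _ ≤ δ / K * (B - 1) + dist (x c) (φ (c - a) (x a)) * B := by
            rw [hgrp]; linarith
        _ ≤ δ / K * (B - 1) + (δ / K * (A - 1)) * B := by nlinarith
        _ = δ / K * (A * B - 1) := by ring
        _ = δ / K * (exp ((K:ℝ) * (b - a)) - 1) := by rw [hAB]
    · push_neg at hF
      exact approx_core hK hφ hδ hK0 x a b hab hx
        (fun t ht => hd t ht (fun hm => hF t hm ht))


variable {d : ℕ} {V : Ed d → Ed d} {φ : ℝ → Ed d → Ed d} {K : ℝ≥0}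

lemma flow_cont_x (hK : LipschitzWith K V) (hφ : IsFlowOf V φ) (s : ℝ) :
    Continuous fun z => φ s z := by
  have : LipschitzWith (Real.toNNReal (exp (K * |s|))) (fun z => φ s z) :=
    LipschitzWith.of_dist_le_mul fun p q => by
      rw [Real.coe_toNNReal _ (exp_pos _).le, mul_comm]
      exact flow_lip hK hφ s p q
  exact this.continuous

lemma translate_cont {d : ℕ} (c : Ed d) : Continuous fun z : Ed d => z + c :=
  continuous_id.add continuous_const

/-- Key dynamical lemma: the forward orbit of any point comes arbitrarily close (in torus
distance) to a minimal point. -/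
lemma exists_minimal_near (hK : LipschitzWith K V) (hφ : IsFlowOf V φ)
    (hVper : IsPeriodicVF V) (q : Ed d) (ε : ℝ) (hε : 0 < ε) :
    ∃ t ≥ (0:ℝ), ∃ p, IsMinimalPt φ p ∧ distT (φ t q) p < ε := by
  classical
  set Q : Set (Ed d) := Metric.closedBall 0 (7 * d) with hQdef
  have hQcomp : IsCompact Q := isCompact_closedBall _ _
  set base : ℕ → Set (Ed d) :=
    fun n => {y | ∃ t, (n:ℝ) ≤ t ∧ ∃ k, y = φ t q + twoPiVec d k} with hbase
  set A : ℕ → Set (Ed d) := fun n => closure (base n) with hA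
  have hAclosed : ∀ n, IsClosed (A n) := fun n => isClosed_closure
  have hAanti : ∀ m n, m ≤ n → A n ⊆ A m := by
    intro m n hmn
    apply closure_mono
    rintro y ⟨t, ht, k, rfl⟩
    exact ⟨t, le_trans (by exact_mod_cast hmn) ht, k, rfl⟩
  have hAQne : ∀ n, (A n ∩ Q).Nonempty := by
    intro n
    obtain ⟨k, hk⟩ := exists_rep (φ (n:ℝ) q)
    refine ⟨φ (n:ℝ) q + twoPiVec d k, subset_closure ⟨(n:ℝ), le_rfl, k, rfl⟩, ?_⟩
    simpa [hQdef, Metric.mem_closedBall, dist_eq_norm] using hk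
  set Ω : Set (Ed d) := ⋂ n, A n with hΩ
  have hΩclosed : IsClosed Ω := isClosed_iInter hAclosed
  have hΩne : Ω.Nonempty := by
    have hne := IsCompact.nonempty_iInter_of_directed_nonempty_isCompact_isClosed
      (fun n => A n ∩ Q)
      (fun m n => ⟨max m n,
        inter_subset_inter_left _ (hAanti m _ (le_max_left _ _)),
        inter_subset_inter_left _ (hAanti n _ (le_max_right _ _))⟩)
      hAQne
      (fun n => hQcomp.of_isClosed_subset ((hAclosed n).inter Metric.isClosed_closedBall)
        inter_subset_right)
      (fun n => (hAclosed n).inter Metric.isClosed_closedBall)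
    obtain ⟨w, hw⟩ := hne
    exact ⟨w, mem_iInter.2 fun n => ((mem_iInter.1 hw) n).1⟩
  have hΩtrans : ∀ z ∈ Ω, ∀ k, z + twoPiVec d k ∈ Ω := by
    intro z hz k
    refine mem_iInter.2 fun n => ?_
    have hz' : z ∈ A n := mem_iInter.1 hz n
    have himg : (fun y => y + twoPiVec d k) '' base n ⊆ base n := by
      rintro _ ⟨y, ⟨t, ht, k', rfl⟩, rfl⟩
      exact ⟨t, ht, k' + k, by rw [twoPiVec_add]; abel⟩
    have hm2 : MapsTo (fun y => y + twoPiVec d k) (base n) (base n) :=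
      fun y hy => himg ⟨y, hy, rfl⟩
    exact (hm2.closure (translate_cont _)) hz'
  have hΩflow : ∀ z ∈ Ω, ∀ s, φ s z ∈ Ω := by
    intro z hz s
    refine mem_iInter.2 fun n => ?_
    set m : ℕ := n + ⌈|s|⌉₊ with hm
    have hz' : z ∈ A m := mem_iInter.1 hz m
    have himg : MapsTo (fun y => φ s y) (base m) (base n) := by
      rintro _ ⟨t, ht, k, rfl⟩
      refine ⟨s + t, ?_, k, ?_⟩
      · have h1 : |s| ≤ (⌈|s|⌉₊ : ℝ) := Nat.le_ceil _
        have h2 : ((m:ℕ):ℝ) = (n:ℝ) + (⌈|s|⌉₊:ℝ) := by rw [hm]; push_cast; ring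
        have := neg_abs_le s
        nlinarith [ht, h1]
      · show φ s (φ t q + twoPiVec d k) = φ (s + t) q + twoPiVec d k
        rw [flow_equivar hK hφ hVper, ← flow_group hK hφ]
    exact (himg.closure (flow_cont_x hK hφ s)) hz'
  -- Zorn's lemma
  set 𝒞 : Set (Set (Ed d)) :=
    {S | S.Nonempty ∧ IsClosed S ∧ TorusInvariant φ S ∧ S ⊆ Ω} with h𝒞
  have hΩ𝒞 : Ω ∈ 𝒞 := ⟨hΩne, hΩclosed, ⟨hΩflow, hΩtrans⟩, subset_rfl⟩
  have hchain : ∀ c ⊆ 𝒞, IsChain (· ⊆ ·) c → c.Nonempty →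
      ∃ lb ∈ 𝒞, ∀ s ∈ c, lb ⊆ s := by
    intro c hc hchain hcn
    haveI : Nonempty c := hcn.to_subtype
    have hdir : Directed (· ⊇ ·) (fun S : c => (S : Set (Ed d)) ∩ Q) := by
      intro S S'
      rcases eq_or_ne (S : Set (Ed d)) (S' : Set (Ed d)) with h | h
      · refine ⟨S, subset_rfl, ?_⟩
        show (S : Set (Ed d)) ∩ Q ⊆ (S' : Set (Ed d)) ∩ Q
        rw [h]
      · rcases hchain S.2 S'.2 (fun hh => h (by rw [hh])) with h' | h'
        · exact ⟨S, subset_rfl, inter_subset_inter_left _ h'⟩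
        · exact ⟨S', inter_subset_inter_left _ h', subset_rfl⟩
    have hne : ∀ S : c, ((S : Set (Ed d)) ∩ Q).Nonempty := by
      intro S
      obtain ⟨hSne, _, hSinv, _⟩ := hc S.2
      obtain ⟨z, hz⟩ := hSne
      obtain ⟨k, hk⟩ := exists_rep z
      exact ⟨z + twoPiVec d k, hSinv.2 z hz k,
        by simpa [hQdef, Metric.mem_closedBall, dist_eq_norm] using hk⟩
    have hcompact : ∀ S : c, IsCompact ((S : Set (Ed d)) ∩ Q) := by
      intro S
      exact hQcomp.of_isClosed_subset (((hc S.2).2.1).inter Metric.isClosed_closedBall)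
        inter_subset_right
    obtain ⟨w, hw⟩ := IsCompact.nonempty_iInter_of_directed_nonempty_isCompact_isClosed
      _ hdir hne hcompact (fun S : c => ((hc S.2).2.1).inter Metric.isClosed_closedBall)
    have hwin : w ∈ ⋂₀ c := by
      refine mem_sInter.2 fun S hS => ?_
      exact ((mem_iInter.1 hw) ⟨S, hS⟩).1
    obtain ⟨S0, hS0⟩ := hcn
    refine ⟨⋂₀ c, ⟨⟨w, hwin⟩, isClosed_sInter fun S hS => (hc hS).2.1,
      ⟨?_, ?_⟩, (sInter_subset_of_mem hS0).trans (hc hS0).2.2.2⟩,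
      fun S hS => sInter_subset_of_mem hS⟩
    · intro z hz t
      exact mem_sInter.2 fun S hS => (hc hS).2.2.1.1 z (mem_sInter.1 hz S hS) t
    · intro z hz k
      exact mem_sInter.2 fun S hS => (hc hS).2.2.1.2 z (mem_sInter.1 hz S hS) k
  obtain ⟨M, hMΩ, hM⟩ := zorn_superset_nonempty 𝒞 hchain Ω hΩ𝒞
  obtain ⟨hMne, hMclosed, hMinv, hMsubΩ⟩ := hM.1
  obtain ⟨p, hp⟩ := hMne
  -- the orbit closure of p equals M
  have horb𝒞 : closure (torusOrbit φ p) ∈ 𝒞 := by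
    refine ⟨⟨p, subset_closure ⟨0, 0, by simp [hφ.1, twoPiVec_zero]⟩⟩, isClosed_closure,
      ⟨?_, ?_⟩, ?_⟩
    · intro z hz s
      have himg : MapsTo (fun y => φ s y) (torusOrbit φ p) (torusOrbit φ p) := by
        rintro _ ⟨t, k, rfl⟩
        refine ⟨s + t, k, ?_⟩
        show φ s (φ t p + twoPiVec d k) = φ (s + t) p + twoPiVec d k
        rw [flow_equivar hK hφ hVper, ← flow_group hK hφ]
      exact (himg.closure (flow_cont_x hK hφ s)) hz
    · intro z hz k
      have himg : MapsTo (fun y => y + twoPiVec d k) (torusOrbit φ p) (torusOrbit φ p) := by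
        rintro _ ⟨t, k', rfl⟩
        exact ⟨t, k' + k, by rw [twoPiVec_add]; abel⟩
      exact (himg.closure (translate_cont _)) hz
    · refine closure_minimal ?_ hΩclosed
      rintro _ ⟨t, k, rfl⟩
      exact hΩtrans _ (hΩflow p (hMsubΩ hp) t) k
  have horbM : closure (torusOrbit φ p) ⊆ M := by
    refine closure_minimal ?_ hMclosed
    rintro _ ⟨t, k, rfl⟩
    exact hMinv.2 _ (hMinv.1 p hp t) k
  have horbEq : closure (torusOrbit φ p) = M :=
    le_antisymm horbM (hM.2 horb𝒞 horbM)
  have hmin : IsMinimalPt φ p := by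
    intro S hS hSclosed hSinv hSne
    rw [horbEq] at hS ⊢
    have hS𝒞 : S ∈ 𝒞 := ⟨hSne, hSclosed, hSinv, hS.trans hMsubΩ⟩
    exact le_antisymm hS (hM.2 hS𝒞 hS)
  -- p is in the closure of the forward orbit of q
  have hpA0 : p ∈ A 0 := mem_iInter.1 (hMsubΩ hp) 0
  rw [hA, Metric.mem_closure_iff] at hpA0
  obtain ⟨z, ⟨t, ht, k, rfl⟩, hdist⟩ := hpA0 ε hε
  refine ⟨t, by exact_mod_cast ht, p, hmin, ?_⟩
  calc distT (φ t q) p ≤ ‖φ t q - p - twoPiVec d (-k)‖ := distT_le _ _ _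
    _ = ‖φ t q + twoPiVec d k - p‖ := by rw [twoPiVec_neg]; abel_nf
    _ < ε := by
        rw [← dist_eq_norm]
        rw [dist_comm]
        exact hdist

end Aux

/-- Every `δ`-solution on a sufficiently long time interval, for `δ` small
enough, comes `ε`-close (in the torus distance) to the closure `Min_V` of the set of minimal
points. -/
theorem deltaSol_comes_close_to_minV
    {d : ℕ} (hd : 1 ≤ d)
    (V : Ed d → Ed d) (hV : ContDiff ℝ (⊤ : ℕ∞) V) (hVper : IsPeriodicVF V)
    (φ : ℝ → Ed d → Ed d) (hφ : IsFlowOf V φ) :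
    ∀ ε > 0, ∃ δ > 0, ∃ T > 0, ∀ x : ℝ → Ed d, IsDeltaSol V δ 0 T x →
      ∃ t ∈ Icc (0 : ℝ) T, ∃ y ∈ MinV φ, distT (x t) y < ε := by
  classical
  intro ε hε
  obtain ⟨K, hK1, hK⟩ := Aux.exists_lipschitz V hV hVper
  have hK0 : (0:ℝ) < K := lt_of_lt_of_le one_pos hK1
  choose tq htq pq hpq1 hpq2 using fun q : Ed d =>
    Aux.exists_minimal_near hK hφ hVper q (ε/4) (by positivity)
  set Q : Set (Ed d) := Metric.closedBall 0 (7 * d) with hQdef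
  have hQcomp : IsCompact Q := isCompact_closedBall _ _
  set r : Ed d → ℝ := fun q => (ε/4) * exp (-((K:ℝ) * tq q)) with hrdef
  have hrpos : ∀ q, 0 < r q := fun q => by positivity
  obtain ⟨s, hsQ, hsfin, hcov⟩ :=
    hQcomp.elim_finite_subcover_image (fun q _ => Metric.isOpen_ball (x := q) (ε := r q))
      (fun q hq => mem_biUnion hq (Metric.mem_ball_self (hrpos q)))
  set T : ℝ := 1 + ∑ q ∈ hsfin.toFinset, tq q with hTdef
  have hsum_nonneg : (0:ℝ) ≤ ∑ q ∈ hsfin.toFinset, tq q :=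
    Finset.sum_nonneg fun q _ => htq q
  have hT0 : 0 < T := by rw [hTdef]; linarith
  have hTq : ∀ q ∈ s, tq q ≤ T := by
    intro q hq
    have : tq q ≤ ∑ q' ∈ hsfin.toFinset, tq q' :=
      Finset.single_le_sum (fun q' _ => htq q') (hsfin.mem_toFinset.2 hq)
    rw [hTdef]; linarith
  set δ : ℝ := ε * K / (8 * exp ((K:ℝ) * T)) with hδdef
  have hδ0 : 0 < δ := by positivity
  refine ⟨δ, hδ0, T, hT0, ?_⟩
  rintro x ⟨hxc, F, hF⟩
  obtain ⟨k, hk⟩ := Aux.exists_rep (x 0)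
  set q0 : Ed d := x 0 + twoPiVec d k with hq0def
  have hq0Q : q0 ∈ Q := by
    simpa [hQdef, Metric.mem_closedBall, dist_eq_norm] using hk
  obtain ⟨q, hqs, hq0ball⟩ := Set.mem_iUnion₂.1 (hcov hq0Q)
  have htqT : tq q ∈ Icc (0:ℝ) T := ⟨htq q, hTq q hqs⟩
  refine ⟨tq q, htqT, pq q, subset_closure (hpq1 q), ?_⟩
  -- Gronwall comparison on [0, tq q]
  have hgron : dist (x (tq q)) (φ (tq q) (x 0)) ≤ δ / K * (exp ((K:ℝ) * tq q) - 1) := by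
    have := Aux.approx_glue hK hφ hδ0.le hK0 F x 0 (tq q) (htq q)
      (hxc.mono (Icc_subset_Icc le_rfl htqT.2))
      (fun t ht htF => hF t ⟨ht.1.le, ht.2.le.trans htqT.2⟩ htF)
    simpa using this
  have hgron2 : dist (x (tq q)) (φ (tq q) (x 0)) ≤ ε/8 := by
    have hexp : exp ((K:ℝ) * tq q) - 1 ≤ exp ((K:ℝ) * T) := by
      have : exp ((K:ℝ) * tq q) ≤ exp ((K:ℝ) * T) := by
        apply exp_le_exp.2
        nlinarith [htqT.2, htq q]
      linarith
    have hcalc : δ / K * (exp ((K:ℝ) * tq q) - 1) ≤ ε/8 := by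
      rw [hδdef]
      have hEpos : (0:ℝ) < exp ((K:ℝ) * T) := exp_pos _
      have h1 : ε * ↑K / (8 * exp ((K:ℝ) * T)) / ↑K = ε / (8 * exp ((K:ℝ) * T)) := by
        field_simp
      rw [h1]
      rw [div_mul_eq_mul_div, div_le_iff₀ (by positivity)]
      have hnn : 0 ≤ exp ((K:ℝ) * tq q) - 1 := by
        have : (1:ℝ) ≤ exp ((K:ℝ) * tq q) := by
          rw [← exp_zero]
          apply exp_le_exp.2
          exact mul_nonneg hK0.le (htq q)
        linarith
      nlinarith
    linarith
  -- flow started at translate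
  have hequi : φ (tq q) q0 = φ (tq q) (x 0) + twoPiVec d k :=
    Aux.flow_equivar hK hφ hVper _ _ _
  have hlip : dist (φ (tq q) q0) (φ (tq q) q) ≤ dist q0 q * exp ((K:ℝ) * tq q) := by
    have := Aux.flow_lip hK hφ (tq q) q0 q
    rwa [abs_of_nonneg (htq q)] at this
  have hball : dist q0 q < r q := Metric.mem_ball.1 hq0ball
  have hflow_close : dist (φ (tq q) q0) (φ (tq q) q) < ε/4 := by
    have hEpos : (0:ℝ) < exp ((K:ℝ) * tq q) := exp_pos _
    have hr_eq : r q * exp ((K:ℝ) * tq q) = ε/4 := by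
      rw [hrdef]
      simp only []
      rw [mul_assoc, ← exp_add]
      simp
    calc dist (φ (tq q) q0) (φ (tq q) q) ≤ dist q0 q * exp ((K:ℝ) * tq q) := hlip
      _ < r q * exp ((K:ℝ) * tq q) := by
          apply mul_lt_mul_of_pos_right hball hEpos
      _ = ε/4 := hr_eq
  -- assemble
  have hstep1 : distT (x (tq q)) (pq q)
      ≤ ‖x (tq q) - φ (tq q) (x 0)‖ + distT (φ (tq q) (x 0)) (pq q) :=
    Aux.distT_le_norm_add _ _ _
  have hstep2 : distT (φ (tq q) (x 0)) (pq q) = distT (φ (tq q) q0) (pq q) := by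
    rw [hequi, Aux.distT_translate]
  have hstep3 : distT (φ (tq q) q0) (pq q)
      ≤ ‖φ (tq q) q0 - φ (tq q) q‖ + distT (φ (tq q) q) (pq q) :=
    Aux.distT_le_norm_add _ _ _
  have hfinal : distT (φ (tq q) q) (pq q) < ε/4 := hpq2 q
  have hn1 : ‖x (tq q) - φ (tq q) (x 0)‖ ≤ ε/8 := by
    rwa [← dist_eq_norm]
  have hn2 : ‖φ (tq q) q0 - φ (tq q) q‖ < ε/4 := by
    rwa [← dist_eq_norm]
  calc distT (x (tq q)) (pq q)
      ≤ ‖x (tq q) - φ (tq q) (x 0)‖ + distT (φ (tq q) (x 0)) (pq q) := hstep1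
    _ = ‖x (tq q) - φ (tq q) (x 0)‖ + distT (φ (tq q) q0) (pq q) := by rw [hstep2]
    _ ≤ ‖x (tq q) - φ (tq q) (x 0)‖ + (‖φ (tq q) q0 - φ (tq q) q‖ + distT (φ (tq q) q) (pq q)) := by
        linarith [hstep3]
    _ < ε/8 + (ε/4 + ε/4) := by linarith
    _ < ε := by linarith
end
end

section
/- Let V(x,y) := (0, (1 − cos x) sin y) on ℝ². The flow induced by ẋ = 0, ẏ = (1 − cos x) sin y is chain transitive on the 2-torus: for every p, q ∈ ℝ² and every δ > 0 there exist T > 0 and a δ-solution z : [0,T] → ℝ² of ż = V(z) with z(0) = p and z(T) − q ∈ 2πℤ². In particular, the flow is chain recurrent on the torus. -/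
open Real Set Filter Topology

noncomputable section

/-- The drift `V(x,y) = (0, (1 - cos x) sin y)` on `ℝ²`. -/
def Vex : Ed 2 → Ed 2 := fun p => WithLp.toLp 2 (![0, (1 - cos (p 0)) * sin (p 1)] : Fin 2 → ℝ)

/-- The vector field `X₁(x,y) = (1, 0)` on `ℝ²`. -/
def X1ex : Ed 2 → Ed 2 := fun _ => WithLp.toLp 2 (![1, 0] : Fin 2 → ℝ)

/-- The vector field `X₂(x,y) = (0, η(y))` on `ℝ²`. -/
def X2ex (η : ℝ → ℝ) : Ed 2 → Ed 2 := fun p => WithLp.toLp 2 (![0, η (p 1)] : Fin 2 → ℝ)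

section ChainTransAux


def mk2 (a b : ℝ) : Ed 2 := (PiLp.continuousLinearEquiv 2 ℝ (fun _ : Fin 2 => ℝ)).symm ![a, b]

@[simp] lemma mk2_zero (a b : ℝ) : mk2 a b 0 = a := rfl
@[simp] lemma mk2_one (a b : ℝ) : mk2 a b 1 = b := rfl

lemma mk2_eq_self (w : Ed 2) : mk2 (w 0) (w 1) = w := by
  ext i; fin_cases i <;> rfl

lemma mk2_sub (a b c d : ℝ) : mk2 a b - mk2 c d = mk2 (a - c) (b - d) := by
  ext i; fin_cases i <;> rfl

lemma Vex_eq (w : Ed 2) : Vex w = mk2 0 ((1 - cos (w 0)) * sin (w 1)) := by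
  ext i; fin_cases i <;> rfl

lemma hasDerivAt_ed2 {g h : ℝ → ℝ} {vg vh : ℝ} {t : ℝ}
    (hg : HasDerivAt g vg t) (hh : HasDerivAt h vh t) :
    HasDerivAt (fun s => mk2 (g s) (h s)) (mk2 vg vh) t := by
  have hpi : HasDerivAt (fun s => (![g s, h s] : Fin 2 → ℝ)) ![vg, vh] t := by
    rw [hasDerivAt_pi]
    intro i
    fin_cases i
    · simpa using hg
    · simpa using hh
  exact ((PiLp.continuousLinearEquiv 2 ℝ (fun _ : Fin 2 => ℝ)).symm :
    (Fin 2 → ℝ) →L[ℝ] Ed 2).hasFDerivAt.comp_hasDerivAt t hpi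

lemma cont_ed2 {g h : ℝ → ℝ} (hg : Continuous g) (hh : Continuous h) :
    Continuous (fun s => mk2 (g s) (h s)) := by
  have : Continuous (fun s => (![g s, h s] : Fin 2 → ℝ)) := by
    apply continuous_pi; intro i; fin_cases i <;> simpa
  exact ((PiLp.continuousLinearEquiv 2 ℝ (fun _ : Fin 2 => ℝ)).symm).continuous.comp this

lemma norm_mk2 (a b : ℝ) : ‖mk2 a b‖ = Real.sqrt (a^2 + b^2) := by
  rw [EuclideanSpace.norm_eq]
  simp [Fin.sum_univ_two, sq_abs]

/-- exact solution of `y' = (1 - cos (x0 + δ t)) sin y` -/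
def seg (δ x0 : ℝ) (m : ℤ) (K : ℝ) (t : ℝ) : ℝ :=
  m * π + 2 * arctan (K * exp ((-1:ℝ)^m * (t - (sin (x0 + δ*t) - sin x0)/δ)))

lemma sin_two_arctan (u : ℝ) : Real.sin (2 * Real.arctan u) = 2 * u / (1 + u^2) := by
  rw [Real.sin_two_mul, Real.sin_arctan, Real.cos_arctan]
  have h1 : (0:ℝ) < 1 + u^2 := by positivity
  have h3 : Real.sqrt (1 + u^2) ≠ 0 := by positivity
  have h2 : Real.sqrt (1 + u^2) ^ 2 = 1 + u^2 := Real.sq_sqrt h1.le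
  field_simp
  rw [h2]

lemma seg_cont (δ x0 : ℝ) (m : ℤ) (K : ℝ) : Continuous (seg δ x0 m K) := by
  unfold seg
  exact continuous_const.add (continuous_const.mul (Real.continuous_arctan.comp (by fun_prop)))

lemma seg_hasDerivAt (δ x0 : ℝ) (m : ℤ) (K : ℝ) (t : ℝ) (hδ : δ ≠ 0) :
    HasDerivAt (seg δ x0 m K)
      ((1 - cos (x0 + δ*t)) * sin (seg δ x0 m K t)) t := by
  set ε : ℝ := (-1:ℝ)^m with hε
  have hεsq : ε * ε = 1 := by
    rw [hε, ← zpow_add₀ (by norm_num : (-1:ℝ) ≠ 0)]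
    have : m + m = 2 * m := by ring
    rw [this, zpow_mul]; norm_num
  set a : ℝ := 1 - cos (x0 + δ*t) with ha
  have hA : HasDerivAt (fun s => s - (sin (x0 + δ*s) - sin x0)/δ) a t := by
    have h1 : HasDerivAt (fun s : ℝ => x0 + δ*s) δ t := by
      simpa using ((hasDerivAt_id t).const_mul δ).const_add x0
    have h2 : HasDerivAt (fun s => sin (x0 + δ*s)) (cos (x0 + δ*t) * δ) t :=
      (Real.hasDerivAt_sin _).comp t h1
    have h3 := ((h2.sub_const (sin x0)).div_const δ)
    have h4 := (hasDerivAt_id t).sub h3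
    convert h4 using 1
    · rfl
    · rfl
    · rfl
    · rw [mul_div_cancel_right₀ _ hδ]
  set u : ℝ → ℝ := fun s => K * exp (ε * (s - (sin (x0 + δ*s) - sin x0)/δ)) with hu
  have hU : HasDerivAt u (u t * (ε * a)) t := by
    have := ((hA.const_mul ε).exp).const_mul K
    convert this using 1
    · rfl
    · rfl
    · simp [hu]; ring
  have harc : HasDerivAt (fun s => (m:ℝ) * π + 2 * arctan (u s))
      (2 * ((1 / (1 + u t ^ 2)) * (u t * (ε * a)))) t := by
    exact (((Real.hasDerivAt_arctan (u t)).comp t hU).const_mul 2).const_add _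
  have hseg : seg δ x0 m K = fun s => (m:ℝ) * π + 2 * arctan (u s) := rfl
  rw [hseg]
  convert harc using 1
  have hsin : sin ((m:ℝ) * π + 2 * arctan (u t)) = ε * (2 * u t / (1 + u t ^ 2)) := by
    rw [add_comm, Real.sin_add_int_mul_pi, sin_two_arctan]
  show a * sin ((m:ℝ) * π + 2 * arctan (u t)) = _
  rw [hsin]
  have h1 : (0:ℝ) < 1 + u t ^2 := by positivity
  field_simp

lemma seg_zero (δ x0 : ℝ) (m : ℤ) (K : ℝ) :
    seg δ x0 m K 0 = m * π + 2 * arctan K := by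
  simp [seg]

lemma floor_pi_bounds (y : ℝ) :
    0 ≤ y - (⌊y/π⌋ : ℝ)*π ∧ y - (⌊y/π⌋ : ℝ)*π < π := by
  have hπ := Real.pi_pos
  have h1 := Int.floor_le (y/π)
  have h2 := Int.lt_floor_add_one (y/π)
  rw [le_div_iff₀ hπ] at h1
  rw [div_lt_iff₀ hπ] at h2
  constructor <;> nlinarith

lemma arctan_tan_half (y : ℝ) (m : ℤ) (hm : m = ⌊y/π⌋) :
    (m:ℝ) * π + 2 * arctan (tan ((y - m*π)/2)) = y := by
  obtain ⟨h1, h2⟩ := floor_pi_bounds y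
  rw [hm] at *
  rw [Real.arctan_tan (by linarith [Real.pi_pos]) (by linarith)]
  ring

lemma key (p q : Ed 2) {δ : ℝ} (hδ : 0 < δ) :
    ∃ T, 1 ≤ T ∧ ∃ z : ℝ → Ed 2,
      IsDeltaSol Vex δ 0 T z ∧ z 0 = p ∧ ∃ k, z T - q = twoPiVec 2 k := by
  have hπ := Real.pi_pos
  have hδ' : δ ≠ 0 := hδ.ne'
  set p0 := p 0 with hp0
  set p1 := p 1 with hp1
  set q0 := q 0 with hq0
  set q1 := q 1 with hq1
  -- stage 1 data
  set n1 : ℤ := ⌊p0/(2*π)⌋ + 1 with hn1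
  set X1 : ℝ := 2*π*n1 with hX1
  have hX1p0 : p0 < X1 := by
    have h2 := Int.lt_floor_add_one (p0/(2*π))
    rw [div_lt_iff₀ (by positivity)] at h2
    rw [hX1, hn1]; push_cast; nlinarith
  set L1 : ℝ := X1 - p0 with hL1
  have hL1pos : 0 < L1 := by simp [hL1]; linarith
  set τ1 : ℝ := L1/δ with hτ1
  have hτ1pos : 0 < τ1 := div_pos hL1pos hδ
  set m : ℤ := ⌊p1/π⌋ with hm
  set K1 : ℝ := tan ((p1 - m*π)/2) with hK1
  set f1 : ℝ → ℝ := seg δ p0 m K1 with hf1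
  have hf10 : f1 0 = p1 := by
    rw [hf1, seg_zero, hK1, arctan_tan_half p1 m hm]
  set Y1 : ℝ := f1 τ1 with hY1
  have hcosX1 : cos X1 = 1 := by
    rw [hX1, mul_comm]; exact Real.cos_int_mul_two_pi n1
  -- stage 3 data
  set j : ℤ := ⌊(X1 - q0)/(2*π)⌋ + 1 with hj
  set L3 : ℝ := q0 + 2*π*j - X1 with hL3
  have hL3pos : 0 < L3 := by
    have h2 := Int.lt_floor_add_one ((X1 - q0)/(2*π))
    rw [div_lt_iff₀ (by positivity)] at h2
    rw [hL3, hj]; push_cast; nlinarith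
  set τ3 : ℝ := L3/δ with hτ3
  have hτ3pos : 0 < τ3 := div_pos hL3pos hδ
  set m' : ℤ := ⌊q1/π⌋ with hm'
  set ε' : ℝ := (-1:ℝ)^m' with hε'
  set A3 : ℝ := τ3 - (sin (X1 + δ*τ3) - sin X1)/δ with hA3
  set K3 : ℝ := tan ((q1 - m'*π)/2) * exp (-(ε' * A3)) with hK3
  set f3 : ℝ → ℝ := seg δ X1 m' K3 with hf3
  have hf3τ3 : f3 τ3 = q1 := by
    rw [hf3]
    show (m':ℝ) * π + 2 * arctan (K3 * exp (ε' * (τ3 - (sin (X1 + δ*τ3) - sin X1)/δ))) = q1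
    rw [← hA3, hK3, mul_assoc, ← Real.exp_add, neg_add_cancel, Real.exp_zero, mul_one]
    exact arctan_tan_half q1 m' hm'
  set Y2 : ℝ := f3 0 with hY2
  set d2 : ℝ := |Y2 - Y1|/δ + 1 with hd2
  have hd2one : 1 ≤ d2 := le_add_of_nonneg_left (by positivity)
  have hd2pos : 0 < d2 := lt_of_lt_of_le one_pos hd2one
  set v2 : ℝ := (Y2 - Y1)/d2 with hv2
  have hv2le : |v2| ≤ δ := by
    rw [hv2, abs_div, abs_of_pos hd2pos, div_le_iff₀ hd2pos, hd2]
    have : |Y2 - Y1| / δ * δ = |Y2 - Y1| := by field_simp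
    nlinarith [abs_nonneg (Y2 - Y1)]
  set τ2 : ℝ := τ1 + d2 with hτ2
  set T : ℝ := τ2 + τ3 with hT
  have hτ12 : τ1 < τ2 := by rw [hτ2]; linarith
  have hτ2T : τ2 < T := by rw [hT]; linarith
  have hT1 : 1 ≤ T := by rw [hT, hτ2]; linarith
  -- the curve
  set z : ℝ → Ed 2 := fun t =>
    if t ≤ τ1 then mk2 (p0 + δ*t) (f1 t)
    else if t ≤ τ2 then mk2 X1 (Y1 + v2*(t - τ1))
    else mk2 (X1 + δ*(t - τ2)) (f3 (t - τ2)) with hzdef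
  have hp0L1 : p0 + δ*τ1 = X1 := by
    rw [hτ1, mul_div_cancel₀ _ hδ', hL1]; ring
  have hY1Y2 : Y1 + v2*(τ2 - τ1) = Y2 := by
    rw [hτ2, hv2]
    field_simp
    ring
  -- continuity
  have hc1 : Continuous (fun t => mk2 (p0 + δ*t) (f1 t)) :=
    cont_ed2 (by fun_prop) (seg_cont δ p0 m K1)
  have hc2 : Continuous (fun t => mk2 X1 (Y1 + v2*(t - τ1))) :=
    cont_ed2 continuous_const (by fun_prop)
  have hc3 : Continuous (fun t => mk2 (X1 + δ*(t - τ2)) (f3 (t - τ2))) :=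
    cont_ed2 (by fun_prop) ((seg_cont δ X1 m' K3).comp (by fun_prop))
  have hzc : Continuous z := by
    rw [hzdef]
    refine Continuous.if_le ?_ ?_ continuous_id continuous_const ?_
    · exact hc1
    · refine Continuous.if_le hc2 hc3 continuous_id continuous_const ?_
      intro x hx
      rw [hx]
      have : τ2 - τ2 = 0 := sub_self τ2
      rw [this, mul_zero, add_zero, hY1Y2]
    · intro x hx
      rw [hx, if_pos hτ12.le, hp0L1, sub_self, mul_zero, add_zero, ← hY1]
  refine ⟨T, hT1, z, ⟨hzc.continuousOn, {0, τ1, τ2, T}, ?_⟩, ?_, ?_⟩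
  · -- derivative bound
    intro t ht htF
    simp only [Finset.mem_insert, Finset.mem_singleton] at htF
    push_neg at htF
    obtain ⟨ht0, htτ1, htτ2, htT⟩ := htF
    obtain ⟨ht0', htT'⟩ := ht
    by_cases hA : t < τ1
    · -- piece 1
      have hzt : z =ᶠ[𝓝 t] (fun s => mk2 (p0 + δ*s) (f1 s)) := by
        filter_upwards [Iio_mem_nhds hA] with s hs
        simp only [hzdef]
        rw [if_pos hs.le]
      refine ⟨mk2 δ ((1 - cos (p0 + δ*t)) * sin (f1 t)), ?_, ?_⟩
      · refine HasDerivAt.congr_of_eventuallyEq ?_ hzt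
        exact hasDerivAt_ed2
          (by simpa using ((hasDerivAt_id t).const_mul δ).const_add p0)
          (seg_hasDerivAt δ p0 m K1 t hδ')
      · have hzt0 : z t = mk2 (p0 + δ*t) (f1 t) := by
          simp only [hzdef]; rw [if_pos hA.le]
        rw [hzt0, Vex_eq, mk2_zero, mk2_one, mk2_sub, sub_zero, sub_self, norm_mk2]
        rw [show (0:ℝ)^2 = 0 by norm_num, add_zero, Real.sqrt_sq hδ.le]
    · push_neg at hA
      have hτ1t : τ1 < t := lt_of_le_of_ne hA (Ne.symm htτ1)
      by_cases hB : t < τ2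
      · -- piece 2
        have hzt : z =ᶠ[𝓝 t] (fun s => mk2 X1 (Y1 + v2*(s - τ1))) := by
          filter_upwards [Ioo_mem_nhds hτ1t hB] with s hs
          simp only [hzdef]
          rw [if_neg (not_le.mpr hs.1), if_pos hs.2.le]
        refine ⟨mk2 0 v2, ?_, ?_⟩
        · refine HasDerivAt.congr_of_eventuallyEq ?_ hzt
          exact hasDerivAt_ed2 (hasDerivAt_const t X1)
            (by simpa using (((hasDerivAt_id t).sub_const τ1).const_mul v2).const_add Y1)
        · have hzt0 : z t = mk2 X1 (Y1 + v2*(t - τ1)) := by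
            simp only [hzdef]; rw [if_neg (not_le.mpr hτ1t), if_pos hB.le]
          rw [hzt0, Vex_eq, mk2_zero, mk2_one, hcosX1, sub_self, zero_mul, mk2_sub,
            sub_zero, sub_zero, norm_mk2]
          rw [show (0:ℝ)^2 = 0 by norm_num, zero_add, Real.sqrt_sq_eq_abs]
          exact hv2le
      · -- piece 3
        push_neg at hB
        have hτ2t : τ2 < t := lt_of_le_of_ne hB (Ne.symm htτ2)
        have hzt : z =ᶠ[𝓝 t] (fun s => mk2 (X1 + δ*(s - τ2)) (f3 (s - τ2))) := by
          filter_upwards [Ioi_mem_nhds hτ2t] with s hs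
          simp only [hzdef]
          rw [if_neg (not_le.mpr (hτ12.trans hs)), if_neg (not_le.mpr hs)]
        refine ⟨mk2 δ ((1 - cos (X1 + δ*(t - τ2))) * sin (f3 (t - τ2))), ?_, ?_⟩
        · refine HasDerivAt.congr_of_eventuallyEq ?_ hzt
          refine hasDerivAt_ed2 ?_ ?_
          · simpa using (((hasDerivAt_id t).sub_const τ2).const_mul δ).const_add X1
          · simpa [hf3, Function.comp_def] using (seg_hasDerivAt δ X1 m' K3 (t - τ2) hδ').comp t
              ((hasDerivAt_id t).sub_const τ2)
        · have hzt0 : z t = mk2 (X1 + δ*(t - τ2)) (f3 (t - τ2)) := by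
            simp only [hzdef]
            rw [if_neg (not_le.mpr (hτ12.trans hτ2t)), if_neg (not_le.mpr hτ2t)]
          rw [hzt0, Vex_eq, mk2_zero, mk2_one, mk2_sub, sub_zero, sub_self, norm_mk2]
          rw [show (0:ℝ)^2 = 0 by norm_num, add_zero, Real.sqrt_sq hδ.le]
  · -- z 0 = p
    simp only [hzdef]
    rw [if_pos hτ1pos.le, mul_zero, add_zero, hf10, hp0, hp1, mk2_eq_self]
  · -- endpoint
    refine ⟨![j, 0], ?_⟩
    have hzT : z T = mk2 (q0 + 2*π*j) q1 := by
      simp only [hzdef]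
      rw [if_neg (not_le.mpr (hτ12.trans hτ2T)), if_neg (not_le.mpr hτ2T)]
      rw [show T - τ2 = τ3 by rw [hT]; ring, hf3τ3]
      rw [show X1 + δ*τ3 = q0 + 2*π*j by rw [hτ3, mul_div_cancel₀ _ hδ', hL3]; ring]
    rw [hzT]
    ext i
    fin_cases i
    · show (mk2 (q0 + 2*π*j) q1 - q) 0 = 2*π*(j:ℝ)
      have : (mk2 (q0 + 2*π*j) q1 - q) 0 = (q0 + 2*π*j) - q 0 := rfl
      rw [this, ← hq0]; ring
    · show (mk2 (q0 + 2*π*j) q1 - q) 1 = 2*π*((0:ℤ):ℝ)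
      have : (mk2 (q0 + 2*π*j) q1 - q) 1 = q1 - q 1 := rfl
      rw [this, ← hq1]; push_cast; ring

end ChainTransAux

/-- The flow of `V(x,y) = (0, (1 - cos x) sin y)` is chain transitive on the
2-torus; in particular it is chain recurrent. -/
theorem Vex_chainTransitive :
    (∀ p q : Ed 2, ∀ δ > 0, ∃ T > 0, ∃ z : ℝ → Ed 2,
        IsDeltaSol Vex δ 0 T z ∧ z 0 = p ∧ ∃ k, z T - q = twoPiVec 2 k) ∧
    ∀ p : Ed 2, ChainRecurrentPt Vex p := by
  constructor
  · intro p q δ hδ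
    obtain ⟨T, hT, z, h1, h2, h3⟩ := key p q hδ
    exact ⟨T, lt_of_lt_of_le one_pos hT, z, h1, h2, h3⟩
  · intro p δ hδ
    exact key p p hδ
end
end

section
/- Let V, X : ℝ^d → ℝ^d be C^∞ vector fields that are bounded together with all their derivatives (so that for every real a, b the vector field aV + bX has a complete flow φ_{aV+bX}), and let ε ∈ ℝ. Then there exist constants C > 0 and θ_0 > 0, depending only on V, X and ε, such that for every x ∈ ℝ^d and every θ ∈ [0, θ_0]: ‖ φ_{V+εX}(θ, φ_V(−2θ, x)) − φ_{V−εX}(−θ, x) ‖ ≤ C θ². -/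
open Real Set Filter Topology

noncomputable section

lemma abs_le_of_mem_uIcc {s t : ℝ} (hs : s ∈ uIcc (0:ℝ) t) : |s| ≤ |t| := by
  rcases Set.mem_uIcc.mp hs with ⟨h1, h2⟩ | ⟨h1, h2⟩
  · rw [abs_of_nonneg h1]; exact le_trans h2 (le_abs_self t)
  · rw [abs_of_nonpos h2]; exact le_trans (neg_le_neg h1) (neg_le_abs t)

lemma flow_dist_le {d : ℕ} (W : Ed d → Ed d) (M : ℝ) (hM : ∀ x, ‖W x‖ ≤ M)
    (φ : ℝ → Ed d → Ed d) (hφ : IsFlowOf W φ) (x : Ed d) (t : ℝ) :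
    ‖φ t x - x‖ ≤ M * |t| := by
  have key := Convex.norm_image_sub_le_of_norm_hasDerivWithin_le
    (f := fun s => φ s x) (f' := fun s => W (φ s x)) (s := uIcc 0 t)
    (fun s _ => (hφ.2 s x).hasDerivWithinAt) (fun s _ => hM _) (convex_uIcc 0 t)
    left_mem_uIcc right_mem_uIcc
  simpa [hφ.1 x, Real.norm_eq_abs] using key

lemma flow_taylor {d : ℕ} (W : Ed d → Ed d) (M L : ℝ) (hL0 : 0 ≤ L)
    (hM : ∀ x, ‖W x‖ ≤ M) (hLip : ∀ a b, ‖W a - W b‖ ≤ L * ‖a - b‖)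
    (φ : ℝ → Ed d → Ed d) (hφ : IsFlowOf W φ) (x : Ed d) (t : ℝ) :
    ‖φ t x - x - t • W x‖ ≤ L * M * t ^ 2 := by
  have hM0 : 0 ≤ M := le_trans (norm_nonneg _) (hM x)
  have hd : ∀ s : ℝ, HasDerivAt (fun s : ℝ => φ s x - s • W x) (W (φ s x) - W x) s := by
    intro s
    have h2 : HasDerivAt (fun s : ℝ => s • W x) ((1:ℝ) • W x) s :=
      (hasDerivAt_id s).smul_const (W x)
    have h3 := (hφ.2 s x).sub h2
    rw [one_smul] at h3
    exact h3
  have key := Convex.norm_image_sub_le_of_norm_hasDerivWithin_le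
    (f := fun s : ℝ => φ s x - s • W x) (f' := fun s => W (φ s x) - W x) (s := uIcc 0 t)
    (fun s _ => (hd s).hasDerivWithinAt)
    (fun s hs => by
      calc ‖W (φ s x) - W x‖ ≤ L * ‖φ s x - x‖ := hLip _ _
        _ ≤ L * (M * |s|) := by
            exact mul_le_mul_of_nonneg_left (flow_dist_le W M hM φ hφ x s) hL0
        _ ≤ L * (M * |t|) := by
            exact mul_le_mul_of_nonneg_left
              (mul_le_mul_of_nonneg_left (abs_le_of_mem_uIcc hs) hM0) hL0)
    (convex_uIcc 0 t) left_mem_uIcc right_mem_uIcc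
  have h0 : φ (0:ℝ) x - (0:ℝ) • W x = x := by simp [hφ.1 x]
  calc ‖φ t x - x - t • W x‖ = ‖(φ t x - t • W x) - (φ 0 x - (0:ℝ) • W x)‖ := by
        rw [h0]; rw [sub_right_comm]
    _ ≤ L * (M * |t|) * ‖t - 0‖ := key
    _ = L * M * (|t| * |t|) := by rw [Real.norm_eq_abs, sub_zero]; ring
    _ = L * M * t ^ 2 := by rw [abs_mul_abs_self]; ring

lemma lip_of_bounds {d : ℕ} (V : Ed d → Ed d) (hV : ContDiff ℝ (⊤ : ℕ∞) V)
    (L : ℝ) (hL : ∀ x, ‖iteratedFDeriv ℝ 1 V x‖ ≤ L) :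
    ∀ a b : Ed d, ‖V a - V b‖ ≤ L * ‖a - b‖ := by
  intro a b
  have hfd : ∀ x : Ed d, ‖fderiv ℝ V x‖ ≤ L := by
    intro x
    refine ContinuousLinearMap.opNorm_le_bound _ (le_trans (norm_nonneg _) (hL x)) ?_
    intro v
    have h1 : fderiv ℝ V x v = iteratedFDeriv ℝ 1 V x (fun _ => v) := by
      rw [iteratedFDeriv_one_apply]
    rw [h1]
    calc ‖iteratedFDeriv ℝ 1 V x (fun _ => v)‖
        ≤ ‖iteratedFDeriv ℝ 1 V x‖ * ∏ i : Fin 1, ‖v‖ :=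
          (iteratedFDeriv ℝ 1 V x).le_opNorm _
      _ = ‖iteratedFDeriv ℝ 1 V x‖ * ‖v‖ := by simp
      _ ≤ L * ‖v‖ := mul_le_mul_of_nonneg_right (hL x) (norm_nonneg _)
  exact Convex.norm_image_sub_le_of_norm_fderiv_le
    (fun x _ => (hV.differentiable (by simp)).differentiableAt)
    (fun x _ => hfd x) convex_univ (mem_univ b) (mem_univ a)

/-- Euler-step estimate: for vector fields `V`, `X` bounded with all their
derivatives, `‖φ_{V+εX}(θ, φ_V(−2θ, x)) − φ_{V−εX}(−θ, x)‖ ≤ C θ²` for all `x` and all small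
`θ ≥ 0`, with `C`, `θ₀` depending only on `V`, `X`, `ε`. -/
theorem euler_step_estimate
    {d : ℕ} (V X : Ed d → Ed d)
    (hV : ContDiff ℝ (⊤ : ℕ∞) V) (hX : ContDiff ℝ (⊤ : ℕ∞) X)
    (hVb : ∀ n : ℕ, ∃ C : ℝ, ∀ x, ‖iteratedFDeriv ℝ n V x‖ ≤ C)
    (hXb : ∀ n : ℕ, ∃ C : ℝ, ∀ x, ‖iteratedFDeriv ℝ n X x‖ ≤ C)
    (ε : ℝ)
    (φV φp φm : ℝ → Ed d → Ed d)
    (hφV : IsFlowOf V φV)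
    (hφp : IsFlowOf (fun x => V x + ε • X x) φp)
    (hφm : IsFlowOf (fun x => V x - ε • X x) φm) :
    ∃ C > 0, ∃ θ₀ > 0, ∀ x : Ed d, ∀ θ ∈ Icc (0 : ℝ) θ₀,
      ‖φp θ (φV (-(2 * θ)) x) - φm (-θ) x‖ ≤ C * θ ^ 2 := by
  obtain ⟨MV0, hMV0⟩ := hVb 0
  obtain ⟨MX0, hMX0⟩ := hXb 0
  obtain ⟨LV0, hLV0⟩ := hVb 1
  obtain ⟨LX0, hLX0⟩ := hXb 1
  set MV : ℝ := max MV0 0 with hMVdef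
  set MX : ℝ := max MX0 0 with hMXdef
  set LV : ℝ := max LV0 0 with hLVdef
  set LX : ℝ := max LX0 0 with hLXdef
  have hMV : ∀ x, ‖V x‖ ≤ MV := fun x => by
    have h := hMV0 x; rw [norm_iteratedFDeriv_zero] at h
    exact le_trans h (le_max_left _ _)
  have hMX : ∀ x, ‖X x‖ ≤ MX := fun x => by
    have h := hMX0 x; rw [norm_iteratedFDeriv_zero] at h
    exact le_trans h (le_max_left _ _)
  have hLipV : ∀ a b : Ed d, ‖V a - V b‖ ≤ LV * ‖a - b‖ :=
    lip_of_bounds V hV LV (fun x => le_trans (hLV0 x) (le_max_left _ _))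
  have hLipX : ∀ a b : Ed d, ‖X a - X b‖ ≤ LX * ‖a - b‖ :=
    lip_of_bounds X hX LX (fun x => le_trans (hLX0 x) (le_max_left _ _))
  have hMV0' : 0 ≤ MV := le_max_right _ _
  have hMX0' : 0 ≤ MX := le_max_right _ _
  have hLV0' : 0 ≤ LV := le_max_right _ _
  have hLX0' : 0 ≤ LX := le_max_right _ _
  set M : ℝ := MV + |ε| * MX with hMdef
  set L : ℝ := LV + |ε| * LX with hLdef
  have hM0 : 0 ≤ M := by positivity
  have hL0 : 0 ≤ L := by positivity
  set Wp : Ed d → Ed d := fun z => V z + ε • X z with hWp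
  set Wm : Ed d → Ed d := fun z => V z - ε • X z with hWm
  have hMp : ∀ z, ‖Wp z‖ ≤ M := fun z => by
    calc ‖V z + ε • X z‖ ≤ ‖V z‖ + ‖ε • X z‖ := norm_add_le _ _
      _ ≤ MV + |ε| * MX := by
          rw [norm_smul, Real.norm_eq_abs]
          exact add_le_add (hMV z) (mul_le_mul_of_nonneg_left (hMX z) (abs_nonneg ε))
  have hMm : ∀ z, ‖Wm z‖ ≤ M := fun z => by
    calc ‖V z - ε • X z‖ ≤ ‖V z‖ + ‖ε • X z‖ := norm_sub_le _ _
      _ ≤ MV + |ε| * MX := by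
          rw [norm_smul, Real.norm_eq_abs]
          exact add_le_add (hMV z) (mul_le_mul_of_nonneg_left (hMX z) (abs_nonneg ε))
  have hLp : ∀ a b, ‖Wp a - Wp b‖ ≤ L * ‖a - b‖ := fun a b => by
    have h1 : Wp a - Wp b = (V a - V b) + ε • (X a - X b) := by
      simp only [hWp, smul_sub]; abel
    rw [h1]
    calc ‖(V a - V b) + ε • (X a - X b)‖ ≤ ‖V a - V b‖ + ‖ε • (X a - X b)‖ := norm_add_le _ _
      _ ≤ LV * ‖a - b‖ + |ε| * (LX * ‖a - b‖) := by
          rw [norm_smul, Real.norm_eq_abs]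
          exact add_le_add (hLipV a b) (mul_le_mul_of_nonneg_left (hLipX a b) (abs_nonneg ε))
      _ = L * ‖a - b‖ := by rw [hLdef]; ring
  have hLm : ∀ a b, ‖Wm a - Wm b‖ ≤ L * ‖a - b‖ := fun a b => by
    have h1 : Wm a - Wm b = (V a - V b) - ε • (X a - X b) := by
      simp only [hWm, smul_sub]; abel
    rw [h1]
    calc ‖(V a - V b) - ε • (X a - X b)‖ ≤ ‖V a - V b‖ + ‖ε • (X a - X b)‖ := norm_sub_le _ _
      _ ≤ LV * ‖a - b‖ + |ε| * (LX * ‖a - b‖) := by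
          rw [norm_smul, Real.norm_eq_abs]
          exact add_le_add (hLipV a b) (mul_le_mul_of_nonneg_left (hLipX a b) (abs_nonneg ε))
      _ = L * ‖a - b‖ := by rw [hLdef]; ring
  refine ⟨4 * LV * MV + 2 * L * MV + 2 * L * M + 1, by positivity, 1, one_pos, ?_⟩
  intro x θ hθ
  have hθ0 : 0 ≤ θ := hθ.1
  set y : Ed d := φV (-(2 * θ)) x with hy
  have hA : ‖φp θ y - y - θ • Wp y‖ ≤ L * M * θ ^ 2 :=
    flow_taylor Wp M L hL0 hMp hLp φp hφp y θ
  have hB : ‖φm (-θ) x - x - (-θ) • Wm x‖ ≤ L * M * θ ^ 2 := by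
    have := flow_taylor Wm M L hL0 hMm hLm φm hφm x (-θ)
    simpa [neg_sq] using this
  have hE2 : ‖y - x - (-(2 * θ)) • V x‖ ≤ 4 * (LV * MV) * θ ^ 2 := by
    have := flow_taylor V MV LV hLV0' hMV hLipV φV hφV x (-(2 * θ))
    calc ‖y - x - (-(2 * θ)) • V x‖ ≤ LV * MV * (-(2 * θ)) ^ 2 := this
      _ = 4 * (LV * MV) * θ ^ 2 := by ring
  have hyx : ‖y - x‖ ≤ MV * (2 * θ) := by
    have := flow_dist_le V MV hMV φV hφV x (-(2 * θ))
    calc ‖y - x‖ ≤ MV * |(-(2 * θ))| := this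
      _ = MV * (2 * θ) := by rw [abs_neg, abs_of_nonneg (by linarith)]
  have hE3 : ‖θ • (Wp y - Wp x)‖ ≤ 2 * (L * MV) * θ ^ 2 := by
    rw [norm_smul, Real.norm_eq_abs, abs_of_nonneg hθ0]
    calc θ * ‖Wp y - Wp x‖ ≤ θ * (L * ‖y - x‖) :=
          mul_le_mul_of_nonneg_left (hLp y x) hθ0
      _ ≤ θ * (L * (MV * (2 * θ))) :=
          mul_le_mul_of_nonneg_left (mul_le_mul_of_nonneg_left hyx hL0) hθ0
      _ = 2 * (L * MV) * θ ^ 2 := by ring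
  have key : φp θ y - φm (-θ) x =
      (φp θ y - y - θ • Wp y) - (φm (-θ) x - x - (-θ) • Wm x)
      + (y - x - (-(2 * θ)) • V x) + θ • (Wp y - Wp x) := by
    simp only [hWp, hWm]
    module
  calc ‖φp θ y - φm (-θ) x‖
      = ‖(φp θ y - y - θ • Wp y) - (φm (-θ) x - x - (-θ) • Wm x)
        + (y - x - (-(2 * θ)) • V x) + θ • (Wp y - Wp x)‖ := by rw [key]
    _ ≤ ‖(φp θ y - y - θ • Wp y) - (φm (-θ) x - x - (-θ) • Wm x)
        + (y - x - (-(2 * θ)) • V x)‖ + ‖θ • (Wp y - Wp x)‖ := norm_add_le _ _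
    _ ≤ (‖(φp θ y - y - θ • Wp y) - (φm (-θ) x - x - (-θ) • Wm x)‖
        + ‖y - x - (-(2 * θ)) • V x‖) + ‖θ • (Wp y - Wp x)‖ := by
          gcongr; exact norm_add_le _ _
    _ ≤ ((‖φp θ y - y - θ • Wp y‖ + ‖φm (-θ) x - x - (-θ) • Wm x‖)
        + ‖y - x - (-(2 * θ)) • V x‖) + ‖θ • (Wp y - Wp x)‖ := by
          gcongr; exact norm_sub_le _ _
    _ ≤ ((L * M * θ ^ 2 + L * M * θ ^ 2) + 4 * (LV * MV) * θ ^ 2)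
        + 2 * (L * MV) * θ ^ 2 := by gcongr
    _ ≤ (4 * LV * MV + 2 * L * MV + 2 * L * M + 1) * θ ^ 2 := by nlinarith [sq_nonneg θ]
end
end

section
/- Let V, X_1, …, X_m be C^∞ vector fields on ℝ^d and let ε ≠ 0. Define the family 𝒴 := {V, −V} ∪ {σV + τεX_k : σ ∈ {1,−1}, τ ∈ {1,−1}, k = 1, …, m}. Then for every p ∈ ℝ^d, the linear span of {W(p) : W ∈ ℬ({V, X_1, …, X_m})} equals the linear span of {W(p) : W ∈ ℬ(𝒴)}. In particular, {V, X_1, …, X_m} satisfies the Hörmander condition at p if and only if 𝒴 does. -/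
open Real Set Filter Topology

noncomputable section

/-- The family `𝒴 = {V, -V} ∪ {σV + τεX_k : σ,τ ∈ {1,-1}, k = 1,…,m}`. -/
def YFam {d m : ℕ} (V : Ed d → Ed d) (X : Fin m → Ed d → Ed d) (ε : ℝ) :
    Set (Ed d → Ed d) :=
  ({V, -V} : Set (Ed d → Ed d)) ∪
    {W | ∃ σ ∈ ({1, -1} : Set ℝ), ∃ τ ∈ ({1, -1} : Set ℝ), ∃ k : Fin m,
      W = σ • V + (τ * ε) • X k}

section Aux

variable {d : ℕ}

lemma lieGen_smooth {B : Set (Ed d → Ed d)} (hB : ∀ W ∈ B, ContDiff ℝ (⊤ : ℕ∞) W)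
    {W : Ed d → Ed d} (h : LieGen B W) : ContDiff ℝ (⊤ : ℕ∞) W := by
  induction h with
  | base X hX => exact hB X hX
  | bracket X Y _ _ ihX ihY =>
    have h1 : ContDiff ℝ (⊤ : ℕ∞) fun p => fderiv ℝ Y p (X p) :=
      (ihY.fderiv_right (by exact_mod_cast le_top)).clm_apply ihX
    have h2 : ContDiff ℝ (⊤ : ℕ∞) fun p => fderiv ℝ X p (Y p) :=
      (ihX.fderiv_right (by exact_mod_cast le_top)).clm_apply ihY
    exact h1.sub h2

lemma vfBracket_neg_symm (X Y : Ed d → Ed d) : vfBracket X Y = - vfBracket Y X := by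
  funext p
  simp [vfBracket, neg_sub]

lemma vfBracket_add_left {X Y : Ed d → Ed d} (Z : Ed d → Ed d)
    (hX : Differentiable ℝ X) (hY : Differentiable ℝ Y) :
    vfBracket (X + Y) Z = vfBracket X Z + vfBracket Y Z := by
  funext p
  have hadd : fderiv ℝ (X + Y) p = fderiv ℝ X p + fderiv ℝ Y p := fderiv_add (hX p) (hY p)
  simp only [vfBracket, Pi.add_apply, hadd, map_add, ContinuousLinearMap.add_apply]
  abel

lemma vfBracket_smul_left {X : Ed d → Ed d} (Z : Ed d → Ed d) (c : ℝ)
    (hX : Differentiable ℝ X) :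
    vfBracket (c • X) Z = c • vfBracket X Z := by
  funext p
  have hs : fderiv ℝ (c • X) p = c • fderiv ℝ X p := fderiv_const_smul (hX p) c
  simp only [vfBracket, Pi.smul_apply, hs, map_smul, ContinuousLinearMap.smul_apply,
    smul_sub]

lemma vfBracket_zero_left (Z : Ed d → Ed d) : vfBracket 0 Z = 0 := by
  funext p
  have : fderiv ℝ (0 : Ed d → Ed d) p = 0 := fderiv_const_apply 0
  simp [vfBracket, this]

lemma bracket_mem_span_left {B : Set (Ed d → Ed d)} (hB : ∀ W ∈ B, ContDiff ℝ (⊤ : ℕ∞) W)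
    {Z W : Ed d → Ed d} (hZ : LieGen B Z)
    (hW : W ∈ Submodule.span ℝ {U | LieGen B U}) :
    vfBracket W Z ∈ Submodule.span ℝ {U | LieGen B U} := by
  have H : ∀ U, U ∈ Submodule.span ℝ {U | LieGen B U} →
      vfBracket U Z ∈ Submodule.span ℝ {U | LieGen B U} ∧ Differentiable ℝ U := by
    intro U hU
    refine Submodule.span_induction (p := fun U _ =>
      vfBracket U Z ∈ Submodule.span ℝ {U | LieGen B U} ∧ Differentiable ℝ U)
      ?_ ?_ ?_ ?_ hU
    · intro x hx
      exact ⟨Submodule.subset_span (LieGen.bracket x Z hx hZ),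
        (lieGen_smooth hB hx).differentiable (by simp)⟩
    · exact ⟨by rw [vfBracket_zero_left]; exact Submodule.zero_mem _, differentiable_const 0⟩
    · rintro x y _ _ ⟨hx1, hx2⟩ ⟨hy1, hy2⟩
      exact ⟨by rw [vfBracket_add_left Z hx2 hy2]; exact Submodule.add_mem _ hx1 hy1,
        hx2.add hy2⟩
    · rintro a x _ ⟨hx1, hx2⟩
      exact ⟨by rw [vfBracket_smul_left Z a hx2]; exact Submodule.smul_mem _ a hx1,
        hx2.const_smul a⟩
  exact (H W hW).1

lemma bracket_mem_span {B : Set (Ed d → Ed d)} (hB : ∀ W ∈ B, ContDiff ℝ (⊤ : ℕ∞) W)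
    {W₁ W₂ : Ed d → Ed d}
    (h1 : W₁ ∈ Submodule.span ℝ {U | LieGen B U})
    (h2 : W₂ ∈ Submodule.span ℝ {U | LieGen B U}) :
    vfBracket W₁ W₂ ∈ Submodule.span ℝ {U | LieGen B U} := by
  have H : ∀ U, U ∈ Submodule.span ℝ {U | LieGen B U} →
      vfBracket W₁ U ∈ Submodule.span ℝ {U | LieGen B U} ∧ Differentiable ℝ U := by
    intro U hU
    refine Submodule.span_induction (p := fun U _ =>
      vfBracket W₁ U ∈ Submodule.span ℝ {U | LieGen B U} ∧ Differentiable ℝ U)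
      ?_ ?_ ?_ ?_ hU
    · intro x hx
      exact ⟨bracket_mem_span_left hB hx h1, (lieGen_smooth hB hx).differentiable (by simp)⟩
    · refine ⟨?_, differentiable_const 0⟩
      rw [vfBracket_neg_symm, vfBracket_zero_left, neg_zero]
      exact Submodule.zero_mem _
    · rintro x y _ _ ⟨hx1, hx2⟩ ⟨hy1, hy2⟩
      refine ⟨?_, hx2.add hy2⟩
      have : vfBracket W₁ (x + y) = vfBracket W₁ x + vfBracket W₁ y := by
        rw [vfBracket_neg_symm, vfBracket_add_left W₁ hx2 hy2,
          vfBracket_neg_symm x W₁, vfBracket_neg_symm y W₁]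
        abel
      rw [this]; exact Submodule.add_mem _ hx1 hy1
    · rintro a x _ ⟨hx1, hx2⟩
      refine ⟨?_, hx2.const_smul a⟩
      have : vfBracket W₁ (a • x) = a • vfBracket W₁ x := by
        rw [vfBracket_neg_symm, vfBracket_smul_left W₁ a hx2, vfBracket_neg_symm W₁ x,
          smul_neg]
      rw [this]; exact Submodule.smul_mem _ a hx1
  exact (H W₂ h2).1

lemma lie_span_le {A B : Set (Ed d → Ed d)} (hB : ∀ W ∈ B, ContDiff ℝ (⊤ : ℕ∞) W)
    (hAB : ∀ W ∈ A, W ∈ Submodule.span ℝ {U | LieGen B U}) :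
    Submodule.span ℝ {U | LieGen A U} ≤ Submodule.span ℝ {U | LieGen B U} := by
  rw [Submodule.span_le]
  intro W hW
  induction hW with
  | base X hX => exact hAB X hX
  | bracket X Y _ _ ihX ihY => exact bracket_mem_span hB ihX ihY

end Aux

/-- The families `{V, X₁, …, Xₘ}` and
`𝒴 = {V,-V} ∪ {σV + τεX_k : σ,τ = ±1}` generate the same Lie span at every point; in
particular one satisfies the Hörmander condition at `p` iff the other does. -/
theorem lie_span_eq_of_YFam
    {d m : ℕ} (V : Ed d → Ed d) (X : Fin m → Ed d → Ed d)
    (hV : ContDiff ℝ (⊤ : ℕ∞) V) (hX : ∀ j, ContDiff ℝ (⊤ : ℕ∞) (X j))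
    (ε : ℝ) (hε : ε ≠ 0) :
    ∀ p : Ed d,
      Submodule.span ℝ {v : Ed d | ∃ W, LieGen (insert V (Set.range X)) W ∧ W p = v} =
        Submodule.span ℝ {v : Ed d | ∃ W, LieGen (YFam V X ε) W ∧ W p = v} ∧
      (Hormander (insert V (Set.range X)) p ↔ Hormander (YFam V X ε) p) := by
  have hAs : ∀ W ∈ insert V (Set.range X), ContDiff ℝ (⊤ : ℕ∞) W := by
    rintro W hW
    rcases Set.mem_insert_iff.1 hW with rfl | ⟨k, rfl⟩
    · exact hV
    · exact hX k
  have hYs : ∀ W ∈ YFam V X ε, ContDiff ℝ (⊤ : ℕ∞) W := by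
    rintro W hW
    rcases hW with hW | ⟨σ, _, τ, _, k, rfl⟩
    · rcases hW with rfl | hW
      · exact hV
      · rw [Set.mem_singleton_iff.1 hW]; exact hV.neg
    · exact (hV.const_smul σ).add ((hX k).const_smul (τ * ε))
  have hVA : LieGen (insert V (Set.range X)) V := LieGen.base V (Set.mem_insert _ _)
  have hVY : LieGen (YFam V X ε) V :=
    LieGen.base V (Set.mem_union_left _ (Set.mem_insert _ _))
  have hkey : Submodule.span ℝ {U | LieGen (insert V (Set.range X)) U} =
      Submodule.span ℝ {U | LieGen (YFam V X ε) U} := by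
    refine le_antisymm (lie_span_le hYs ?_) (lie_span_le hAs ?_)
    · rintro W hW
      rcases Set.mem_insert_iff.1 hW with rfl | ⟨k, rfl⟩
      · exact Submodule.subset_span hVY
      · have h1 : ((1 : ℝ) • V + ((1 : ℝ) * ε) • X k) ∈ YFam V X ε :=
          Set.mem_union_right _
            ⟨1, Set.mem_insert _ _, 1, Set.mem_insert _ _, k, rfl⟩
        have hXk : X k = ε⁻¹ • (((1 : ℝ) • V + ((1 : ℝ) * ε) • X k) - V) := by
          rw [one_smul, one_mul, add_sub_cancel_left, smul_smul, inv_mul_cancel₀ hε,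
            one_smul]
        rw [hXk]
        exact Submodule.smul_mem _ _ (Submodule.sub_mem _
          (Submodule.subset_span (LieGen.base _ h1)) (Submodule.subset_span hVY))
    · rintro W hW
      have hXA : ∀ k : Fin m, X k ∈ Submodule.span ℝ {U | LieGen (insert V (Set.range X)) U} :=
        fun k => Submodule.subset_span
          (LieGen.base (X k) (Set.mem_insert_iff.2 (Or.inr ⟨k, rfl⟩)))
      rcases hW with hW | ⟨σ, _, τ, _, k, rfl⟩
      · rcases hW with rfl | hW
        · exact Submodule.subset_span hVA
        · rw [Set.mem_singleton_iff.1 hW, show -V = (-1 : ℝ) • V from (neg_one_smul ℝ V).symm]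
          exact Submodule.smul_mem _ _ (Submodule.subset_span hVA)
      · exact Submodule.add_mem _
          (Submodule.smul_mem _ _ (Submodule.subset_span hVA))
          (Submodule.smul_mem _ _ (hXA k))
  intro p
  have himg : ∀ A : Set (Ed d → Ed d),
      Submodule.span ℝ {v : Ed d | ∃ W, LieGen A W ∧ W p = v} =
        (Submodule.span ℝ {W | LieGen A W}).map
          (LinearMap.proj (R := ℝ) (φ := fun _ : Ed d => Ed d) p) := by
    intro A
    have hset : {v : Ed d | ∃ W, LieGen A W ∧ W p = v} =
        (fun W : Ed d → Ed d => W p) '' {W | LieGen A W} := by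
      ext v; simp [Set.mem_image, Set.mem_setOf_eq]
    rw [hset, ← Submodule.span_image]
    rfl
  have heq : Submodule.span ℝ {v : Ed d | ∃ W, LieGen (insert V (Set.range X)) W ∧ W p = v} =
      Submodule.span ℝ {v : Ed d | ∃ W, LieGen (YFam V X ε) W ∧ W p = v} := by
    rw [himg, himg, hkey]
  exact ⟨heq, by unfold Hormander; rw [heq]⟩
end
end
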